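/- Let (c_n)_{n≥1} be a bounded sequence of real numbers such that sup{ |c_n − c_i| : i an integer with n/2 ≤ i ≤ n } → 0 as n → ∞. Then liminf_{n→∞} c_n ≥ liminf_{n→∞} (1/n) ∑_{i=1}^{n} c_i. -/

import Mathlib

open MeasureTheory ProbabilityTheory Filter

noncomputable section

namespace RWLoc

/-- The `i`-th standard basis vector of `ℤ^d`. -/
def basis (d : ℕ) (i : Fin d) : Fin d → ℤ := fun j => if j = i then 1 else 0

/-- The set of the `2d` signed standard basis vectors of `ℤ^d`. -/
def stepSet (d : ℕ) : Finset (Fin d → ℤ) :=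
  Finset.image (basis d) Finset.univ ∪ Finset.image (fun i => -basis d i) Finset.univ

/-- The uniform distribution on the `2d` signed standard basis vectors of `ℤ^d`. -/
def stepMeasure (d : ℕ) : Measure (Fin d → ℤ) :=
  ((stepSet d).card : ENNReal)⁻¹ • ∑ s ∈ stepSet d, Measure.dirac s

/-- `T` is an i.i.d. family of uniform steps (uniform on the `2d` signed standard basis
vectors) on the probability space `(Ω, μ)`. -/
def IsSteps {Ω : Type*} [MeasurableSpace Ω] (μ : Measure Ω) (d : ℕ) {ι : Type*}
    (T : ι → Ω → (Fin d → ℤ)) : Prop :=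
  IsProbabilityMeasure μ ∧ (∀ i, Measurable (T i)) ∧
    iIndepFun T μ ∧ ∀ i, μ.map (T i) = stepMeasure d

/-- The one-sided walk started at `v` with steps `S`: position after `n` steps. -/
def walk {d : ℕ} (v : Fin d → ℤ) (S : ℕ → (Fin d → ℤ)) (n : ℕ) : Fin d → ℤ :=
  v + ∑ i ∈ Finset.range n, S i

/-- The two-sided walk (started at the origin) determined by the steps `T`. -/
def walk₂ {d : ℕ} (T : ℤ → (Fin d → ℤ)) (n : ℤ) : Fin d → ℤ :=
  if 0 ≤ n then ∑ i ∈ Finset.Ico (0 : ℤ) n, T i else ∑ i ∈ Finset.Ico n (0 : ℤ), T i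

/-- The edge `{X̄ n, X̄ (n+1)}` is a cut-edge of the two-sided walk with steps `T`:
`{X̄ m : m ≤ n}` and `{X̄ m : m ≥ n + 1}` are disjoint. -/
def CutAt {d : ℕ} (T : ℤ → (Fin d → ℤ)) (n : ℤ) : Prop :=
  ∀ i j : ℤ, i ≤ n → n + 1 ≤ j → walk₂ T i ≠ walk₂ T j

/-- The number of `i ∈ {0, …, n-1}` such that `{X̄ i, X̄ (i+1)}` is a cut-edge. -/
def cutCount {d : ℕ} (T : ℤ → (Fin d → ℤ)) (n : ℕ) : ℕ :=
  Set.ncard {i : ℕ | i < n ∧ CutAt T (i : ℤ)}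

/-- The set of cut-edges (as unordered pairs) of the two-sided walk with steps `T`. -/
def cutEdges {d : ℕ} (T : ℤ → (Fin d → ℤ)) : Set (Sym2 (Fin d → ℤ)) :=
  {e | ∃ i : ℤ, CutAt T i ∧ e = s(walk₂ T i, walk₂ T (i + 1))}

/-- The trace graph of `X_a, …, X_b`: the simple graph whose edges are the pairs
`{X i, X (i+1)}` for `a ≤ i < b`. -/
def segGraph {V : Type*} (X : ℕ → V) (a b : ℕ) : SimpleGraph V where
  Adj u w := u ≠ w ∧ ∃ i, a ≤ i ∧ i < b ∧ ((X i = u ∧ X (i+1) = w) ∨ (X i = w ∧ X (i+1) = u))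
  symm := by
    refine ⟨?_⟩
    rintro u w ⟨h1, i, h2, h3, h4⟩
    exact ⟨h1.symm, i, h2, h3, h4.symm⟩
  loopless := by refine ⟨?_⟩; rintro u ⟨h1, -⟩; exact h1 rfl

/-- The `n`-step trace graph of `X`. -/
def traceGraph {V : Type*} (X : ℕ → V) (n : ℕ) : SimpleGraph V := segGraph X 0 n

/-- The total (infinite) trace graph of `X`. -/
def traceGraphInf {V : Type*} (X : ℕ → V) : SimpleGraph V where
  Adj u w := u ≠ w ∧ ∃ i, (X i = u ∧ X (i+1) = w) ∨ (X i = w ∧ X (i+1) = u)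
  symm := by
    refine ⟨?_⟩
    rintro u w ⟨h1, i, h4⟩
    exact ⟨h1.symm, i, h4.symm⟩
  loopless := by refine ⟨?_⟩; rintro u ⟨h1, -⟩; exact h1 rfl

/-- The maximum `G`-distance among the vertices `X_a, …, X_b`. -/
def diamOn {V : Type*} (G : SimpleGraph V) (X : ℕ → V) (a b : ℕ) : ℕ :=
  Finset.sup (Finset.Icc a b ×ˢ Finset.Icc a b) fun p => G.dist (X p.1) (X p.2)

/-- The diameter of the `n`-step trace graph of `X`. -/
def traceDiam {V : Type*} (X : ℕ → V) (n : ℕ) : ℕ := diamOn (traceGraph X n) X 0 n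

/-- The diameter of the trace graph of `X_a, …, X_b`. -/
def segDiam {V : Type*} (X : ℕ → V) (a b : ℕ) : ℕ := diamOn (segGraph X a b) X a b

/-- `x` is an endpoint of every diametrical path of `G`, where `D` is the diameter of `G` :
every path of length `D` joining two vertices at graph distance `D` has `x` as an endpoint. -/
def EndsAllDiam {V : Type*} (G : SimpleGraph V) (D : ℕ) (x : V) : Prop :=
  ∀ ⦃u w : V⦄ (p : G.Walk u w), p.IsPath → p.length = D → G.dist u w = D → u = x ∨ w = x

/-- The source `X 0` is an endpoint of every diametrical path of the `n`-step trace graph. -/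
def SourceDiam {V : Type*} (X : ℕ → V) (n : ℕ) : Prop :=
  EndsAllDiam (traceGraph X n) (traceDiam X n) (X 0)


/-- The subgraph of `ℤ^d` induced by a set of vertices `A`: edges are all pairs of vertices
of `A` at `ℓ¹`-distance `1`. -/
def inducedGraph (d : ℕ) (A : Set (Fin d → ℤ)) : SimpleGraph (Fin d → ℤ) where
  Adj u w := u ∈ A ∧ w ∈ A ∧ (∑ k, |u k - w k|) = 1
  symm := by
    refine ⟨?_⟩
    rintro u w ⟨h1, h2, h3⟩
    refine ⟨h2, h1, ?_⟩
    rw [← h3]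
    exact Finset.sum_congr rfl fun k _ => abs_sub_comm _ _
  loopless := by
    refine ⟨?_⟩
    rintro u ⟨-, -, h⟩
    simp [sub_self] at h

lemma rwloc_chain (c : ℕ → ℝ) (ε : ℝ) (hε : 0 ≤ ε) (N : ℕ)
    (hN : ∀ n ≥ N, ∀ i : ℕ, n ≤ 2 * i → i ≤ n → |c n - c i| ≤ ε) :
    ∀ j : ℕ, ∀ n i : ℕ, N ≤ i → n ≤ 2 ^ j * i → i ≤ n → |c n - c i| ≤ j * ε := by
  intro j
  induction j with
  | zero =>
    intro n i _ h1 h2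
    simp only [pow_zero, one_mul] at h1
    have : n = i := le_antisymm h1 h2
    simp [this]
  | succ j ih =>
    intro n i hNi h1 h2
    by_cases hc : n ≤ 2 ^ j * i
    · calc |c n - c i| ≤ j * ε := ih n i hNi hc h2
        _ ≤ (j + 1 : ℕ) * ε := by
            apply mul_le_mul_of_nonneg_right _ hε
            exact_mod_cast Nat.le_succ j
    · push_neg at hc
      rcases Nat.eq_zero_or_pos j with hj | hj
      · subst hj
        have hn : N ≤ n := hNi.trans h2
        have := hN n hn i (by simpa [pow_succ] using h1) h2
        calc |c n - c i| ≤ ε := this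
          _ ≤ (0 + 1 : ℕ) * ε := by simp
      · have hi1 : 1 ≤ i := by
          by_contra hi0
          push_neg at hi0
          interval_cases i
          simp at hc
          omega
        have h2i : 2 * i ≤ n := by
          have : 2 * i ≤ 2 ^ j * i := by
            apply Nat.mul_le_mul_right
            calc 2 = 2 ^ 1 := (pow_one 2).symm
              _ ≤ 2 ^ j := Nat.pow_le_pow_right (by norm_num) hj
          omega
        have hstep : |c (2 * i) - c i| ≤ ε :=
          hN (2 * i) (by omega) i le_rfl (by omega)
        have hmain : |c n - c (2 * i)| ≤ j * ε := by
          apply ih n (2 * i) (by omega) _ h2i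
          calc n ≤ 2 ^ (j + 1) * i := h1
            _ = 2 ^ j * (2 * i) := by ring
        calc |c n - c i| = |(c n - c (2 * i)) + (c (2 * i) - c i)| := by ring_nf
          _ ≤ |c n - c (2 * i)| + |c (2 * i) - c i| := abs_add_le _ _
          _ ≤ j * ε + ε := add_le_add hmain hstep
          _ = (j + 1 : ℕ) * ε := by push_cast; ring

/-- Cesàro means. If `(c_n)` is a bounded real sequence with
`sup { |c_n − c_i| : n/2 ≤ i ≤ n } → 0` as `n → ∞`, then
`liminf_n c_n ≥ liminf_n (1/n) ∑_{i=1}^n c_i`. -/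
theorem stmt_13 (c : ℕ → ℝ) (B : ℝ) (hB : ∀ n, |c n| ≤ B)
    (h : ∀ ε > (0 : ℝ), ∃ N : ℕ, ∀ n ≥ N, ∀ i : ℕ, n ≤ 2 * i → i ≤ n → |c n - c i| ≤ ε) :
    atTop.liminf (fun n : ℕ => (∑ i ∈ Finset.Icc 1 n, c i) / n) ≤ atTop.liminf c := by
  have hB0 : 0 ≤ B := (abs_nonneg _).trans (hB 0)
  -- lower bound on averages
  have havg : ∀ n : ℕ, -B ≤ (∑ i ∈ Finset.Icc 1 n, c i) / n := by
    intro n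
    rcases Nat.eq_zero_or_pos n with hn | hn
    · subst hn; simp; linarith
    · rw [le_div_iff₀ (by positivity)]
      have : -(n * B) ≤ ∑ i ∈ Finset.Icc 1 n, c i := by
        rw [neg_le]
        calc -∑ i ∈ Finset.Icc 1 n, c i = ∑ i ∈ Finset.Icc 1 n, -c i := by
              rw [Finset.sum_neg_distrib]
          _ ≤ ∑ i ∈ Finset.Icc 1 n, B := by
              apply Finset.sum_le_sum
              intro i _
              have := hB i
              have := abs_le.1 this
              linarith [this.1]
          _ = (n : ℝ) * B := by
              rw [Finset.sum_const, Nat.card_Icc, nsmul_eq_mul]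
              norm_num
        
      linarith
  apply le_of_forall_sub_le
  intro δ hδ
  rw [sub_le_iff_le_add]
  -- choose k with 2*B ≤ δ/4 * 2^k
  obtain ⟨k, hk⟩ := pow_unbounded_of_one_lt (R := ℝ) (8 * B / δ) one_lt_two
  have hk' : 2 * B ≤ δ / 4 * 2 ^ k := by
    rw [div_lt_iff₀ hδ] at hk
    nlinarith [pow_pos (zero_lt_two (α := ℝ)) k]
  set ε : ℝ := δ / (4 * (k + 1)) with hεdef
  have hε : 0 < ε := by positivity
  obtain ⟨N, hN⟩ := h ε hε
  have chain := rwloc_chain c ε hε.le N hN k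
  have hkε : (k : ℝ) * ε ≤ δ / 4 := by
    rw [hεdef, mul_div_assoc', div_le_div_iff₀ (by positivity) (by norm_num)]
    nlinarith [Nat.cast_nonneg (α := ℝ) k]
  -- key estimate
  have key : ∀ n : ℕ, 2 ^ k * N ≤ n → 1 ≤ n →
      (∑ i ∈ Finset.Icc 1 n, c i) / n ≤ c n + δ := by
    intro n hn hn1
    have hnR : (0 : ℝ) < n := by exact_mod_cast hn1
    rw [div_le_iff₀ hnR]
    set big := (Finset.Icc 1 n).filter (fun i => n ≤ 2 ^ k * i) with hbig
    set small := (Finset.Icc 1 n).filter (fun i => ¬ n ≤ 2 ^ k * i) with hsmall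
    have hsplit : ∑ i ∈ Finset.Icc 1 n, c i = ∑ i ∈ big, c i + ∑ i ∈ small, c i :=
      (Finset.sum_filter_add_sum_filter_not _ _ _).symm
    have hbigcard : big.card + small.card = n := by
      rw [hbig, hsmall, Finset.card_filter_add_card_filter_not, Nat.card_Icc]
      omega
    have hbigsum : ∑ i ∈ big, c i ≤ big.card * (c n + k * ε) := by
      calc ∑ i ∈ big, c i ≤ ∑ i ∈ big, (c n + k * ε) := by
            apply Finset.sum_le_sum
            intro i hi
            rw [hbig, Finset.mem_filter, Finset.mem_Icc] at hi
            have hNi : N ≤ i := by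
              by_contra hcon
              push_neg at hcon
              have hp : 1 ≤ 2 ^ k := Nat.one_le_two_pow
              have hm : 2 ^ k * (i + 1) ≤ 2 ^ k * N := Nat.mul_le_mul_left _ hcon
              have he : 2 ^ k * (i + 1) = 2 ^ k * i + 2 ^ k := by ring
              omega
            have := chain n i hNi hi.2 hi.1.2
            have := abs_le.1 this
            linarith [this.1]
        _ = big.card * (c n + k * ε) := by rw [Finset.sum_const, nsmul_eq_mul]
    have hsmallsum : ∑ i ∈ small, c i ≤ small.card * B := by
      calc ∑ i ∈ small, c i ≤ ∑ i ∈ small, B := by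
            apply Finset.sum_le_sum
            intro i _
            exact le_of_abs_le (hB i)
        _ = small.card * B := by rw [Finset.sum_const, nsmul_eq_mul]
    -- small.card ≤ n / 2^k
    have hsc : (small.card : ℝ) * 2 ^ k ≤ n := by
      have hsub : small ⊆ Finset.Icc 1 ((n - 1) / 2 ^ k) := by
        intro i hi
        rw [hsmall, Finset.mem_filter, Finset.mem_Icc] at hi
        rw [Finset.mem_Icc]
        refine ⟨hi.1.1, ?_⟩
        have h1 : 2 ^ k * i < n := by omega
        rw [Nat.le_div_iff_mul_le (Nat.pow_pos (n := k) (by norm_num))]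
        have hcm : i * 2 ^ k = 2 ^ k * i := Nat.mul_comm _ _
        omega
      have hcard : small.card ≤ (n - 1) / 2 ^ k := by
        calc small.card ≤ (Finset.Icc 1 ((n - 1) / 2 ^ k)).card := Finset.card_le_card hsub
          _ = (n - 1) / 2 ^ k := by simp [Nat.card_Icc]
      have h2 : ((n - 1) / 2 ^ k : ℕ) * 2 ^ k ≤ n := by
        have := Nat.div_mul_le_self (n - 1) (2 ^ k)
        omega
      calc (small.card : ℝ) * 2 ^ k ≤ (((n - 1) / 2 ^ k : ℕ) : ℝ) * 2 ^ k := by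
            apply mul_le_mul_of_nonneg_right _ (by positivity)
            exact_mod_cast hcard
        _ = ((((n - 1) / 2 ^ k : ℕ) * 2 ^ k : ℕ) : ℝ) := by push_cast; ring
        _ ≤ n := by exact_mod_cast h2
    have hcn : -B ≤ c n := by linarith [(abs_le.1 (hB n)).1]
    have hsB : (small.card : ℝ) * (2 * B) ≤ n * (δ / 4) := by
      have h2k : (0 : ℝ) < 2 ^ k := by positivity
      calc (small.card : ℝ) * (2 * B) ≤ (small.card : ℝ) * (δ / 4 * 2 ^ k) := by
            apply mul_le_mul_of_nonneg_left hk' (Nat.cast_nonneg _)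
        _ = ((small.card : ℝ) * 2 ^ k) * (δ / 4) := by ring
        _ ≤ n * (δ / 4) := by
            apply mul_le_mul_of_nonneg_right hsc (by positivity)
    have hcards : (big.card : ℝ) + small.card = n := by exact_mod_cast hbigcard
    have hkε0 : (0 : ℝ) ≤ k * ε := by positivity
    calc ∑ i ∈ Finset.Icc 1 n, c i
        = ∑ i ∈ big, c i + ∑ i ∈ small, c i := hsplit
      _ ≤ big.card * (c n + k * ε) + small.card * B := add_le_add hbigsum hsmallsum
      _ = n * (c n + k * ε) + (small.card : ℝ) * (B - c n - k * ε) := by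
          rw [← hcards]; ring
      _ ≤ n * (c n + k * ε) + (small.card : ℝ) * (2 * B) := by
          apply add_le_add_right
          apply mul_le_mul_of_nonneg_left _ (Nat.cast_nonneg _)
          linarith
      _ ≤ n * (c n + δ / 4) + n * (δ / 4) := by
          apply add_le_add _ hsB
          apply mul_le_mul_of_nonneg_left _ hnR.le
          linarith
      _ ≤ (c n + δ) * n := by nlinarith
  -- pass to liminf
  have hev : ∀ᶠ n in atTop, (∑ i ∈ Finset.Icc 1 n, c i) / n ≤ c n + δ := by
    filter_upwards [eventually_ge_atTop (max (2 ^ k * N) 1)] with n hn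
    exact key n (le_trans (le_max_left _ _) hn) (le_trans (le_max_right _ _) hn)
  have hbddu : atTop.IsBoundedUnder (· ≥ ·)
      (fun n : ℕ => (∑ i ∈ Finset.Icc 1 n, c i) / n) :=
    ⟨-B, Filter.eventually_map.2 (Eventually.of_forall fun n =>
      show (∑ i ∈ Finset.Icc 1 n, c i) / n ≥ -B from havg n)⟩
  have hcobv : atTop.IsCoboundedUnder (· ≥ ·) (fun n : ℕ => c n + δ) :=
    Filter.IsBoundedUnder.isCoboundedUnder_ge
      ⟨B + δ, Filter.eventually_map.2 (Eventually.of_forall fun n =>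
        add_le_add (le_of_abs_le (hB n)) le_rfl)⟩
  have hstep : atTop.liminf (fun n : ℕ => (∑ i ∈ Finset.Icc 1 n, c i) / n) ≤
      atTop.liminf (fun n : ℕ => c n + δ) :=
    liminf_le_liminf hev hbddu hcobv
  have hcb : atTop.IsCoboundedUnder (· ≥ ·) c :=
    Filter.IsBoundedUnder.isCoboundedUnder_ge
      ⟨B, Filter.eventually_map.2 (Eventually.of_forall fun n => le_of_abs_le (hB n))⟩
  have hbb : atTop.IsBoundedUnder (· ≥ ·) c :=
    ⟨-B, Filter.eventually_map.2 (Eventually.of_forall fun n =>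
      show c n ≥ -B from (abs_le.1 (hB n)).1)⟩
  rw [liminf_add_const atTop c δ hcb hbb] at hstep
  exact hstep

end RWLoc
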